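/- arXiv:2009.07038 — 3 statements merged into one kernel-verified Lean document; each statement's English description precedes it below -/
import Mathlib

section
/- Let γ : (0,∞) → ℝ be C², positive, nonincreasing, with lim_{s→∞} γ(s) = 0, and suppose l·|γ'(s)|² ≤ γ(s)·γ''(s) for all s > 0, where l > 1. Fix v* > 0. Then for all s ≥ v*, γ(s)^{-(l-1)} ≤ d(l−1)(s − v*) + γ(v*)^{-(l-1)}, where d = −γ(v*)^{−l}·γ'(v*) > 0. -/
theorem gamma_power_growth (γ γ' γ'' : ℝ → ℝ) (l : ℝ) (hl : 1 < l)
    (vs : ℝ) (hvs : 0 < vs)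
    (hderiv : ∀ s : ℝ, 0 < s → HasDerivAt γ (γ' s) s)
    (hderiv2 : ∀ s : ℝ, 0 < s → HasDerivAt γ' (γ'' s) s)
    (hcont : ContinuousOn γ'' (Set.Ioi 0))
    (hpos : ∀ s : ℝ, 0 < s → 0 < γ s)
    (hmono : AntitoneOn γ (Set.Ioi 0))
    (hlim : Filter.Tendsto γ Filter.atTop (nhds 0))
    (hA3 : ∀ s : ℝ, 0 < s → l * (γ' s) ^ 2 ≤ γ s * γ'' s) :
    0 < -(γ vs) ^ (-l) * γ' vs ∧
    ∀ s : ℝ, vs ≤ s →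
      (γ s) ^ (-(l - 1)) ≤
        (-(γ vs) ^ (-l) * γ' vs) * (l - 1) * (s - vs) + (γ vs) ^ (-(l - 1)) := by
  have hIoi : ∀ s : ℝ, vs ≤ s → (0:ℝ) < s := fun s hs => lt_of_lt_of_le hvs hs
  -- γ'' is nonnegative
  have hγ'' : ∀ s : ℝ, 0 < s → 0 ≤ γ'' s := by
    intro s hs
    nlinarith [hA3 s hs, sq_nonneg (γ' s), hpos s hs]
  -- γ' is nonpositive
  have hγ'le : ∀ s : ℝ, 0 < s → γ' s ≤ 0 := by
    intro s hs
    have h1 : Filter.Tendsto (slope γ s) (nhdsWithin s (Set.Ioi s)) (nhds (γ' s)) :=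
      (hasDerivAt_iff_tendsto_slope.mp (hderiv s hs)).mono_left
        (nhdsWithin_mono s fun t (ht : s < t) => ht.ne')
    refine le_of_tendsto h1 ?_
    filter_upwards [self_mem_nhdsWithin] with t ht
    have hst : s < t := ht
    have h2 : γ t ≤ γ s := hmono (Set.mem_Ioi.2 hs) (Set.mem_Ioi.2 (hs.trans hst)) hst.le
    rw [slope_def_field]
    apply div_nonpos_of_nonpos_of_nonneg <;> linarith
  -- γ' is monotone on (0, ∞)
  have hγ'mono : MonotoneOn γ' (Set.Ioi 0) := by
    apply monotoneOn_of_deriv_nonneg (convex_Ioi 0)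
    · exact fun s hs => ((hderiv2 s hs).continuousAt).continuousWithinAt
    · rw [interior_Ioi]
      exact fun s hs => ((hderiv2 s hs).differentiableAt).differentiableWithinAt
    · rw [interior_Ioi]
      intro s hs
      rw [(hderiv2 s hs).deriv]
      exact hγ'' s hs
  -- γ' vs < 0
  have hγ'neg : γ' vs < 0 := by
    rcases lt_or_eq_of_le (hγ'le vs hvs) with h | h
    · exact h
    exfalso
    have hz : ∀ s : ℝ, vs ≤ s → γ' s = 0 := fun s hs =>
      le_antisymm (hγ'le s (hIoi s hs))
        (h ▸ hγ'mono (Set.mem_Ioi.2 hvs) (Set.mem_Ioi.2 (hIoi s hs)) hs)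
    have hγmono : MonotoneOn γ (Set.Ici vs) := by
      apply monotoneOn_of_deriv_nonneg (convex_Ici vs)
      · exact fun s hs => ((hderiv s (hIoi s hs)).continuousAt).continuousWithinAt
      · rw [interior_Ici]
        exact fun s hs =>
          ((hderiv s (hIoi s (le_of_lt hs))).differentiableAt).differentiableWithinAt
      · rw [interior_Ici]
        intro s hs
        rw [(hderiv s (hIoi s (le_of_lt hs))).deriv]
        exact le_of_eq (hz s (le_of_lt hs)).symm
    have hev : ∀ᶠ s in Filter.atTop, γ s < γ vs :=
      hlim.eventually_lt_const (hpos vs hvs)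
    obtain ⟨s, hs1, hs2⟩ := (hev.and (Filter.eventually_ge_atTop vs)).exists
    exact absurd (hγmono (Set.mem_Ici.2 le_rfl) (Set.mem_Ici.2 hs2) hs2) (not_le.2 hs1)
  have hrpow : ∀ (s : ℝ), 0 < s → ∀ p : ℝ, (0:ℝ) < γ s ^ p :=
    fun s hs p => Real.rpow_pos_of_pos (hpos s hs) p
  constructor
  · nlinarith [hrpow vs hvs (-l)]
  -- second part
  intro s hs
  set d : ℝ := -(γ vs) ^ (-l) * γ' vs with hd
  -- g = -γ^(-l) * γ'
  set g : ℝ → ℝ := fun t => -(γ t ^ (-l)) * γ' t with hg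
  have hgderiv : ∀ t : ℝ, 0 < t →
      HasDerivAt g (-(γ' t * -l * γ t ^ (-l - 1)) * γ' t + -(γ t ^ (-l)) * γ'' t) t :=
    fun t ht => (((hderiv t ht).rpow_const (Or.inl (hpos t ht).ne')).neg).mul (hderiv2 t ht)
  have hgd_nonpos : ∀ t : ℝ, 0 < t →
      -(γ' t * -l * γ t ^ (-l - 1)) * γ' t + -(γ t ^ (-l)) * γ'' t ≤ 0 := by
    intro t ht
    have hsplit : γ t ^ (-l) = γ t ^ (-l - 1) * γ t := by
      rw [← Real.rpow_add_one (hpos t ht).ne' (-l - 1)]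
      ring_nf
    rw [hsplit]
    have h1 := hA3 t ht
    have h2 := hrpow t ht (-l - 1)
    nlinarith [mul_le_mul_of_nonneg_left h1 h2.le]
  have hganti : AntitoneOn g (Set.Ici vs) := by
    apply antitoneOn_of_deriv_nonpos (convex_Ici vs)
    · exact fun t ht => ((hgderiv t (hIoi t ht)).continuousAt).continuousWithinAt
    · rw [interior_Ici]
      exact fun t ht =>
        ((hgderiv t (hIoi t (le_of_lt ht))).differentiableAt).differentiableWithinAt
    · rw [interior_Ici]
      intro t ht
      rw [(hgderiv t (hIoi t (le_of_lt ht))).deriv]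
      exact hgd_nonpos t (hIoi t (le_of_lt ht))
  have hgle : ∀ t : ℝ, vs ≤ t → g t ≤ d := by
    intro t ht
    have := hganti (Set.mem_Ici.2 le_rfl) (Set.mem_Ici.2 ht) ht
    simpa [hg, hd] using this
  -- F
  set F : ℝ → ℝ := fun t => d * (l - 1) * (t - vs) + (γ vs) ^ (-(l - 1)) - γ t ^ (-(l - 1))
    with hF
  have hFderiv : ∀ t : ℝ, 0 < t →
      HasDerivAt F (d * (l - 1) - γ' t * -(l - 1) * γ t ^ (-(l - 1) - 1)) t := by
    intro t ht
    have h1 : HasDerivAt (fun u : ℝ => d * (l - 1) * (u - vs) + (γ vs) ^ (-(l - 1)))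
        (d * (l - 1)) t := by
      simpa using (((hasDerivAt_id t).sub_const vs).const_mul (d * (l - 1))).add_const
        ((γ vs) ^ (-(l - 1)))
    exact h1.sub ((hderiv t ht).rpow_const (Or.inl (hpos t ht).ne'))
  have hFmono : MonotoneOn F (Set.Ici vs) := by
    apply monotoneOn_of_deriv_nonneg (convex_Ici vs)
    · exact fun t ht => ((hFderiv t (hIoi t ht)).continuousAt).continuousWithinAt
    · rw [interior_Ici]
      exact fun t ht =>
        ((hFderiv t (hIoi t (le_of_lt ht))).differentiableAt).differentiableWithinAt
    · rw [interior_Ici]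
      intro t ht
      have ht0 : 0 < t := hIoi t (le_of_lt ht)
      rw [(hFderiv t ht0).deriv]
      have hexp : (-(l - 1) - 1 : ℝ) = -l := by ring
      rw [hexp]
      have hgt := hgle t (le_of_lt ht)
      have : g t = -(γ t ^ (-l)) * γ' t := rfl
      nlinarith [hgt, this]
  have hFvs : F vs = 0 := by simp [hF]
  have := hFmono (Set.mem_Ici.2 le_rfl) (Set.mem_Ici.2 hs) hs
  rw [hFvs] at this
  have hFs : 0 ≤ d * (l - 1) * (s - vs) + (γ vs) ^ (-(l - 1)) - γ s ^ (-(l - 1)) := this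
  linarith
end

section
/- Let γ : (0,∞) → ℝ be C², positive, nonincreasing, tending to 0 at infinity, satisfying l·|γ'(s)|² ≤ γ(s)·γ''(s) for all s > 0 with some l > 1. Then for every k > 1/(l−1), lim_{s→∞} s^k γ(s) = +∞. -/
/-!
Condition (A3') says exactly that `F = γ ^ (1 - l)` is concave on `(0, ∞)`: its second derivative
is `(1 - l) γ ^ (-l - 1) (γ γ'' - l γ'²) ≤ 0`. A concave function lies below its tangent line,
so `F s ≤ C s` for `s ≥ 1`, i.e. `γ s ≥ (C s) ^ (-1 / (l - 1))`, and `s ^ k γ s → ∞` as soon as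
`k > 1 / (l - 1)`.
-/

open Set Filter

theorem hasDerivAt_deriv_rpow_const {g g' g'' : ℝ → ℝ} {x : ℝ} (p : ℝ)
    (hg : HasDerivAt g (g' x) x) (hg' : HasDerivAt g' (g'' x) x) (hx : 0 < g x) :
    HasDerivAt (fun t => g' t * p * g t ^ (p - 1))
      (p * g x ^ (p - 2) * (g x * g'' x - (1 - p) * g' x ^ 2)) x := by
  have hpow := hg.rpow_const (p := p - 1) (Or.inl hx.ne')
  refine ((hg'.mul_const p).mul hpow).congr_deriv ?_
  have hsplit : g x ^ (p - 1) = g x ^ (p - 2) * g x := by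
    rw [← Real.rpow_add_one hx.ne']; ring_nf
  rw [show p - 1 - 1 = p - 2 by ring, hsplit]
  ring

theorem concaveOn_rpow_of_one_sub_mul_sq_le {U : Set ℝ} (hU : Convex ℝ U) (hUo : IsOpen U)
    {g g' g'' : ℝ → ℝ} {p : ℝ} (hp : p ≤ 0)
    (hg : ∀ x ∈ U, HasDerivAt g (g' x) x) (hg' : ∀ x ∈ U, HasDerivAt g' (g'' x) x)
    (hpos : ∀ x ∈ U, 0 < g x) (hineq : ∀ x ∈ U, (1 - p) * g' x ^ 2 ≤ g x * g'' x) :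
    ConcaveOn ℝ U (fun x => g x ^ p) := by
  have hF : ∀ x ∈ U, HasDerivAt (fun t => g t ^ p) (g' x * p * g x ^ (p - 1)) x :=
    fun x hx => (hg x hx).rpow_const (Or.inl (hpos x hx).ne')
  refine concaveOn_of_hasDerivWithinAt2_nonpos (f' := fun x => g' x * p * g x ^ (p - 1))
    (f'' := fun x => p * g x ^ (p - 2) * (g x * g'' x - (1 - p) * g' x ^ 2)) hU
    (fun x hx => (hF x hx).continuousAt.continuousWithinAt) ?_ ?_ ?_ <;> rw [hUo.interior_eq]
  · exact fun x hx => (hF x hx).hasDerivWithinAt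
  · exact fun x hx =>
      (hasDerivAt_deriv_rpow_const p (hg x hx) (hg' x hx) (hpos x hx)).hasDerivWithinAt
  · intro x hx
    have hcoef : p * g x ^ (p - 2) ≤ 0 :=
      mul_nonpos_of_nonpos_of_nonneg hp (Real.rpow_nonneg (hpos x hx).le _)
    exact mul_nonpos_of_nonpos_of_nonneg hcoef (sub_nonneg.2 (hineq x hx))

theorem ConcaveOn.le_add_mul_sub_of_hasDerivAt {S : Set ℝ} {f : ℝ → ℝ} {a y f' : ℝ}
    (hf : ConcaveOn ℝ S f) (ha : a ∈ S) (hy : y ∈ S) (hf' : HasDerivAt f f' a) :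
    f y ≤ f a + f' * (y - a) := by
  rcases lt_trichotomy a y with hay | rfl | hya
  · have := hf.slope_le_of_hasDerivAt ha hy hay hf'
    rw [slope_def_field, div_le_iff₀ (sub_pos.2 hay)] at this
    linarith
  · simp
  · have := hf.le_slope_of_hasDerivAt hy ha hya hf'
    rw [slope_def_field, le_div_iff₀ (sub_pos.2 hya)] at this
    linarith

theorem tendsto_rpow_mul_atTop_of_rpow_neg_le_mul {f : ℝ → ℝ} {m C k : ℝ} (hm : 0 < m)
    (hC : 0 < C) (hk : 1 / m < k) (hf : ∀ᶠ s in atTop, 0 < f s ∧ f s ^ (-m) ≤ C * s) :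
    Tendsto (fun s => s ^ k * f s) atTop atTop := by
  have hlower : Tendsto (fun s : ℝ => C ^ (-(1 / m)) * s ^ (k - 1 / m)) atTop atTop :=
    (tendsto_rpow_atTop (sub_pos.2 hk)).const_mul_atTop (Real.rpow_pos_of_pos hC _)
  refine tendsto_atTop_mono' _ ?_ hlower
  filter_upwards [hf, eventually_gt_atTop 0] with s ⟨hfs, hbound⟩ hs
  have hroot : (C * s) ^ (-(1 / m)) ≤ f s := by
    calc (C * s) ^ (-(1 / m)) ≤ (f s ^ (-m)) ^ (-(1 / m)) :=
          Real.rpow_le_rpow_of_nonpos (Real.rpow_pos_of_pos hfs _) hbound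
            (neg_nonpos.2 (by positivity))
      _ = f s := by
          rw [← Real.rpow_mul hfs.le, neg_mul_neg, mul_one_div_cancel hm.ne', Real.rpow_one]
  calc C ^ (-(1 / m)) * s ^ (k - 1 / m) = s ^ k * (C * s) ^ (-(1 / m)) := by
        rw [Real.mul_rpow hC.le hs.le, Real.rpow_sub hs, Real.rpow_neg hs.le, div_eq_mul_inv]
        ring
    _ ≤ s ^ k * f s := mul_le_mul_of_nonneg_left hroot (Real.rpow_nonneg hs.le _)

theorem A3_implies_A2_general (γ γ' γ'' : ℝ → ℝ) (l : ℝ) (hl : 1 < l)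
    (hderiv : ∀ s : ℝ, 0 < s → HasDerivAt γ (γ' s) s)
    (hderiv2 : ∀ s : ℝ, 0 < s → HasDerivAt γ' (γ'' s) s)
    (hpos : ∀ s : ℝ, 0 < s → 0 < γ s)
    (hA3 : ∀ s : ℝ, 0 < s → l * (γ' s) ^ 2 ≤ γ s * γ'' s) :
    ∀ k : ℝ, 1 / (l - 1) < k →
      Filter.Tendsto (fun s : ℝ => s ^ k * γ s) Filter.atTop Filter.atTop := by
  intro k hk
  set F : ℝ → ℝ := fun s => γ s ^ (1 - l)
  have hconc : ConcaveOn ℝ (Ioi 0) F :=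
    concaveOn_rpow_of_one_sub_mul_sq_le (convex_Ioi 0) isOpen_Ioi (by linarith) hderiv hderiv2
      hpos (by simpa only [sub_sub_cancel, mem_Ioi] using hA3)
  obtain ⟨F'1, hF1⟩ : ∃ d, HasDerivAt F d 1 :=
    ⟨_, (hderiv 1 one_pos).rpow_const (Or.inl (hpos 1 one_pos).ne')⟩
  have hF1pos : 0 < F 1 := Real.rpow_pos_of_pos (hpos 1 one_pos) _
  refine tendsto_rpow_mul_atTop_of_rpow_neg_le_mul (sub_pos.2 hl)
    (add_pos_of_pos_of_nonneg hF1pos (abs_nonneg F'1)) hk ?_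
  filter_upwards [eventually_ge_atTop 1] with s hs
  have hs0 : 0 < s := by linarith
  refine ⟨hpos s hs0, ?_⟩
  rw [neg_sub]
  have htangent := hconc.le_add_mul_sub_of_hasDerivAt (mem_Ioi.2 one_pos) hs0 hF1
  nlinarith [le_abs_self F'1, abs_nonneg F'1]

theorem A3_implies_A2 (γ γ' γ'' : ℝ → ℝ) (l : ℝ) (hl : 1 < l)
    (hderiv : ∀ s : ℝ, 0 < s → HasDerivAt γ (γ' s) s)
    (hderiv2 : ∀ s : ℝ, 0 < s → HasDerivAt γ' (γ'' s) s)
    (hcont : ContinuousOn γ'' (Set.Ioi 0))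
    (hpos : ∀ s : ℝ, 0 < s → 0 < γ s)
    (hmono : AntitoneOn γ (Set.Ioi 0))
    (hlim : Filter.Tendsto γ Filter.atTop (nhds 0))
    (hA3 : ∀ s : ℝ, 0 < s → l * (γ' s) ^ 2 ≤ γ s * γ'' s) :
    ∀ k : ℝ, 1 / (l - 1) < k →
      Filter.Tendsto (fun s : ℝ => s ^ k * γ s) Filter.atTop Filter.atTop :=
  A3_implies_A2_general γ γ' γ'' l hl hderiv hderiv2 hpos hA3
end

section
/- Let n ≥ 3, q* = 2n/(n−2), k > 0, and let q, p satisfy q* ≤ q < p = 2q − nk/2 with q > nk/2. Define α = (p−k)(p−q) / (p(p − k − 2q/q*)). Then 0 < α < 1 and 2pα/(p−k) < 2. -/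
theorem interpolation_exponent_admissible (n : ℕ) (hn : 3 ≤ n)
    (k q p : ℝ) (hk : 0 < k)
    (hq : 2 * (n : ℝ) / ((n : ℝ) - 2) ≤ q)
    (hqk : (n : ℝ) * k / 2 < q)
    (hp : p = 2 * q - (n : ℝ) * k / 2)
    (hqp : q < p) :
    0 < (p - k) * (p - q) / (p * (p - k - 2 * q / (2 * (n : ℝ) / ((n : ℝ) - 2)))) ∧
    (p - k) * (p - q) / (p * (p - k - 2 * q / (2 * (n : ℝ) / ((n : ℝ) - 2)))) < 1 ∧
    2 * p * ((p - k) * (p - q) / (p * (p - k - 2 * q / (2 * (n : ℝ) / ((n : ℝ) - 2))))) / (p - k) < 2 := by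
  have hN2 : (2 : ℝ) < (n : ℝ) := by exact_mod_cast lt_of_lt_of_le (by norm_num) hn
  set N := (n : ℝ) with hNdef
  have hN0 : (0 : ℝ) < N := by linarith
  have hN2' : N - 2 ≠ 0 := by linarith
  have hN0' : N ≠ 0 := ne_of_gt hN0
  have hq0 : 0 < q := lt_of_lt_of_le (div_pos (by linarith) (by linarith)) hq
  have hp0 : 0 < p := lt_trans hq0 hqp
  have hpk : 0 < p - k := by nlinarith
  have h2q : 0 < 2 * q - N * k := by linarith
  have hden : p - k - 2 * q / (2 * N / (N - 2)) = (N + 2) * (2 * q - N * k) / (2 * N) := by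
    rw [hp]; field_simp; ring
  have hD : 0 < p - k - 2 * q / (2 * N / (N - 2)) := by
    rw [hden]; positivity
  have hB : 0 < p * (p - k - 2 * q / (2 * N / (N - 2))) := mul_pos hp0 hD
  have hpq : 0 < p - q := by linarith
  refine ⟨div_pos (mul_pos hpk hpq) hB, ?_, ?_⟩
  · rw [div_lt_one hB]
    have key : p * (p - k - 2 * q / (2 * N / (N - 2))) - (p - k) * (p - q)
        = 2 * q * (2 * q - N * k) / N := by
      rw [hp]; field_simp; ring
    have : 0 < 2 * q * (2 * q - N * k) / N := by positivity
    linarith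
  · have key2 : 2 * (p - k) * (p * (p - k - 2 * q / (2 * N / (N - 2))))
        - 2 * p * ((p - k) * (p - q)) = 2 * p * (p - k) * (2 * q - N * k) / N := by
      rw [hp]; field_simp; ring
    rw [div_lt_iff₀ hpk,
      show 2 * p * ((p - k) * (p - q) / (p * (p - k - 2 * q / (2 * N / (N - 2)))))
        = 2 * p * ((p - k) * (p - q)) / (p * (p - k - 2 * q / (2 * N / (N - 2)))) from by ring,
      div_lt_iff₀ hB]
    have : 0 < 2 * p * (p - k) * (2 * q - N * k) / N := by positivity
    nlinarith [key2]
end
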